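/- Let β > 1 be real, let 0 < γ_j^{(2)} ≤ 1 for all j, and let t ∈ ℕ. Then for all l, m ∈ ℤ^t one has r_{β,γ^{(2)}}(l + m) · r_{β,γ^{(2)}}(l) ≤ (∏_{j=1}^{t} max(1, 2^β γ_j^{(2)})) · r_{β,γ^{(2)}}(m); equivalently, r_{β,γ^{(2)}}(l+m)/r_{β,γ^{(2)}}(m) ≤ (1/r_{β,γ^{(2)}}(l)) · ∏_{j=1}^{t} max(1, 2^β γ_j^{(2)}). -/

import Mathlib

open scoped BigOperators

/-! Both sides factor over coordinates, so it suffices to treat `t = 1`. For nonzero `l`, `m` and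
`l + m`, the bound is `|m| ≤ |l + m| + |l| ≤ 2 |l + m| |l|` raised to the power `-β`; when one of
them vanishes it reduces to `r ≤ 1` or to `r(-m) = r(m)`. -/

/-- The Korobov-space decay function r_{β,γ} : ℤ → ℝ,
    r_{β,γ}(0) = 1 and r_{β,γ}(l) = γ·|l|^{-β} for l ≠ 0. -/
noncomputable def rK (β γ : ℝ) (l : ℤ) : ℝ :=
  if l = 0 then 1 else γ * |(l : ℝ)| ^ (-β)

lemma Int.abs_add_le_two_mul_abs_mul_abs {a b : ℤ} (ha : a ≠ 0) (hb : b ≠ 0) :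
    |a + b| ≤ 2 * |a| * |b| := by
  have ha1 := Int.one_le_abs ha
  have hb1 := Int.one_le_abs hb
  nlinarith [abs_add_le a b]

section

variable {β γ : ℝ}

@[simp]
lemma rK_zero : rK β γ 0 = 1 := if_pos rfl

lemma rK_of_ne_zero {l : ℤ} (hl : l ≠ 0) : rK β γ l = γ * |(l : ℝ)| ^ (-β) := if_neg hl

@[simp]
lemma rK_neg (l : ℤ) : rK β γ (-l) = rK β γ l := by
  simp [rK, abs_neg]

lemma rK_nonneg (hγ : 0 ≤ γ) (l : ℤ) : 0 ≤ rK β γ l := by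
  unfold rK; split_ifs <;> positivity

lemma rK_pos (hγ : 0 < γ) (l : ℤ) : 0 < rK β γ l := by
  unfold rK
  split_ifs with hl
  · exact one_pos
  · have : (0 : ℝ) < |(l : ℝ)| := by positivity
    positivity

lemma rK_le_one (hβ : 0 ≤ β) (hγ1 : γ ≤ 1) (l : ℤ) : rK β γ l ≤ 1 := by
  rcases eq_or_ne l 0 with rfl | hl
  · simp
  rw [rK_of_ne_zero hl]
  have h1 : (1 : ℝ) ≤ |(l : ℝ)| := by exact_mod_cast Int.one_le_abs hl
  exact mul_le_one₀ hγ1 (by positivity) (Real.rpow_le_one_of_one_le_of_nonpos h1 (by linarith))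

lemma rK_add_mul_rK_le_of_ne_zero (hβ : 0 ≤ β) (hγ : 0 ≤ γ) {l m : ℤ} (hl : l ≠ 0)
    (hm : m ≠ 0) (hlm : l + m ≠ 0) : rK β γ (l + m) * rK β γ l ≤ 2 ^ β * γ * rK β γ m := by
  rw [rK_of_ne_zero hl, rK_of_ne_zero hm, rK_of_ne_zero hlm]
  have hm_abs : (0 : ℝ) < |(m : ℝ)| := by positivity
  have h_abs : |(m : ℝ)| ≤ 2 * |((l + m : ℤ) : ℝ)| * |(l : ℝ)| := by
    have := Int.abs_add_le_two_mul_abs_mul_abs hlm (neg_ne_zero.mpr hl)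
    rw [add_neg_cancel_comm, abs_neg] at this
    exact_mod_cast this
  have h_rpow := Real.rpow_le_rpow_of_nonpos hm_abs h_abs (neg_nonpos.mpr hβ)
  rw [Real.mul_rpow (by positivity) (by positivity),
    Real.mul_rpow (by positivity) (by positivity), Real.rpow_neg zero_le_two] at h_rpow
  calc γ * |((l + m : ℤ) : ℝ)| ^ (-β) * (γ * |(l : ℝ)| ^ (-β))
      = 2 ^ β * γ * (γ * ((2 ^ β)⁻¹ * |((l + m : ℤ) : ℝ)| ^ (-β) * |(l : ℝ)| ^ (-β))) := by
        field_simp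
    _ ≤ 2 ^ β * γ * (γ * |(m : ℝ)| ^ (-β)) := by gcongr

lemma rK_add_mul_rK_le_max_mul (hβ : 0 ≤ β) (hγ0 : 0 ≤ γ) (hγ1 : γ ≤ 1) (l m : ℤ) :
    rK β γ (l + m) * rK β γ l ≤ max 1 (2 ^ β * γ) * rK β γ m := by
  rcases eq_or_ne l 0 with rfl | hl
  · simpa using le_mul_of_one_le_left (rK_nonneg hγ0 m) (le_max_left _ _)
  rcases eq_or_ne m 0 with rfl | hm
  · rw [add_zero, rK_zero, mul_one]
    exact (mul_le_one₀ (rK_le_one hβ hγ1 l) (rK_nonneg hγ0 l) (rK_le_one hβ hγ1 l)).trans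
      (le_max_left _ _)
  rcases eq_or_ne (l + m) 0 with hlm | hlm
  · rw [hlm, rK_zero, one_mul, eq_neg_of_add_eq_zero_left hlm, rK_neg]
    exact le_mul_of_one_le_left (rK_nonneg hγ0 m) (le_max_left _ _)
  calc rK β γ (l + m) * rK β γ l ≤ 2 ^ β * γ * rK β γ m :=
        rK_add_mul_rK_le_of_ne_zero hβ hγ0 hl hm hlm
    _ ≤ max 1 (2 ^ β * γ) * rK β γ m := by gcongr; exacts [rK_nonneg hγ0 m, le_max_right _ _]

end

open Finset in
lemma prod_rK_add_mul_prod_rK_le {ι : Type*} (s : Finset ι) {β : ℝ} (hβ : 0 ≤ β)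
    {γ : ι → ℝ} (hγ : ∀ j ∈ s, 0 ≤ γ j ∧ γ j ≤ 1) (l m : ι → ℤ) :
    (∏ j ∈ s, rK β (γ j) (l j + m j)) * (∏ j ∈ s, rK β (γ j) (l j)) ≤
      (∏ j ∈ s, max 1 (2 ^ β * γ j)) * ∏ j ∈ s, rK β (γ j) (m j) := by
  rw [← prod_mul_distrib, ← prod_mul_distrib]
  refine prod_le_prod (fun j hj => ?_) (fun j hj => ?_)
  · exact mul_nonneg (rK_nonneg (hγ j hj).1 _) (rK_nonneg (hγ j hj).1 _)
  · exact rK_add_mul_rK_le_max_mul hβ (hγ j hj).1 (hγ j hj).2 _ _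

theorem stmt_13 (β : ℝ) (hβ : 1 < β) (γ2 : ℕ → ℝ) (hγ2 : ∀ j, 0 < γ2 j ∧ γ2 j ≤ 1)
    (t : ℕ) (l m : Fin t → ℤ) :
    (∏ j : Fin t, rK β (γ2 j) (l j + m j)) * (∏ j : Fin t, rK β (γ2 j) (l j)) ≤
        (∏ j : Fin t, max 1 ((2 : ℝ) ^ β * γ2 j)) * ∏ j : Fin t, rK β (γ2 j) (m j) ∧
      (∏ j : Fin t, rK β (γ2 j) (l j + m j)) / (∏ j : Fin t, rK β (γ2 j) (m j)) ≤
        (∏ j : Fin t, rK β (γ2 j) (l j))⁻¹ * ∏ j : Fin t, max 1 ((2 : ℝ) ^ β * γ2 j) := by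
  have h_prod := prod_rK_add_mul_prod_rK_le Finset.univ (by linarith) (γ := fun j : Fin t => γ2 j)
    (fun j _ => ⟨(hγ2 j).1.le, (hγ2 j).2⟩) l m
  refine ⟨h_prod, ?_⟩
  have h_pos (n : Fin t → ℤ) : 0 < ∏ j : Fin t, rK β (γ2 j) (n j) :=
    Finset.prod_pos fun j _ => rK_pos (hγ2 j).1 _
  rwa [div_le_iff₀ (h_pos m), inv_mul_eq_div, div_mul_eq_mul_div, le_div_iff₀ (h_pos l)]
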